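/- arXiv:math/0504186 — 4 statements merged into one kernel-verified Lean document; each statement's English description precedes it below -/
import Mathlib

section
/- Let k = 3a for a positive integer a, and let c > 2k. If A = [0, a-1] ∪ [c, c+a-1] ∪ [2c, 2c+a-1] (unions of integer intervals), then |A| = k and |2A| = 3|A| - 3 + (k/3 - 2). -/
/-! A is the union of three translates `i * c + [0, a - 1]`, so `A + A` is the union of the five
translates `k * c + [0, 2a - 2]`. Since `c` exceeds the length of these intervals, the translates
are pairwise disjoint, whence `|A| = 3a` and `|2A| = 5(2a - 1) = 3|A| - 3 + (a - 2)`. -/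

open Pointwise

noncomputable def intervalProgression (n : ℕ) (c d : ℤ) : Finset ℤ :=
  (Finset.range n).biUnion fun i => Finset.Icc (i * c) (i * c + d)

theorem mem_intervalProgression {n : ℕ} {c d x : ℤ} :
    x ∈ intervalProgression n c d ↔ ∃ i < n, i * c ≤ x ∧ x ≤ i * c + d := by
  simp [intervalProgression]

theorem intervalProgression_add {n m : ℕ} {c d e : ℤ} (hn : 0 < n) (hm : 0 < m)
    (hd : 0 ≤ d) (he : 0 ≤ e) :
    intervalProgression n c d + intervalProgression m c e =
      intervalProgression (n + m - 1) c (d + e) := by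
  ext x
  simp only [Finset.mem_add, mem_intervalProgression]
  constructor
  · rintro ⟨y, ⟨i, hi, hy⟩, z, ⟨j, hj, hz⟩, rfl⟩
    refine ⟨i + j, by omega, ?_⟩
    rw [Nat.cast_add, add_mul]
    omega
  · rintro ⟨k, hk, hx⟩
    obtain ⟨i, j, rfl, hi, hj⟩ : ∃ i j, k = i + j ∧ i < n ∧ j < m :=
      ⟨min k (n - 1), k - min k (n - 1), by omega, by omega, by omega⟩
    rw [Nat.cast_add, add_mul] at hx
    refine ⟨i * c + min (x - (i * c + j * c)) d, ⟨i, hi, by omega⟩,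
      x - (i * c + min (x - (i * c + j * c)) d), ⟨j, hj, by omega⟩, by ring⟩

theorem card_intervalProgression {n : ℕ} {c d : ℤ} (hd : 0 ≤ d) (hdc : d < c) :
    ((intervalProgression n c d).card : ℤ) = n * (d + 1) := by
  rw [intervalProgression, Finset.card_biUnion]
  · rw [Finset.sum_const_nat (m := (d + 1).toNat) fun i _ => by rw [Int.card_Icc]; congr 1; ring]
    simp only [Finset.card_range, Nat.cast_mul, Int.toNat_of_nonneg (by omega : 0 ≤ d + 1)]
  · intro i _ j _ hij
    rw [Function.onFun, Finset.disjoint_left]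
    intro x hxi hxj
    rw [Finset.mem_Icc] at hxi hxj
    rcases Nat.lt_or_gt_of_ne hij with h | h
    · have : (i : ℤ) + 1 ≤ j := by exact_mod_cast h
      nlinarith
    · have : (j : ℤ) + 1 ≤ i := by exact_mod_cast h
      nlinarith

theorem stmt_2 (a : ℕ) (c : ℤ) (ha : 0 < a) (hc : 2 * (3 * (a : ℤ)) < c)
    (A : Finset ℤ)
    (hA : A = Finset.Icc 0 ((a : ℤ) - 1) ∪ Finset.Icc c (c + (a : ℤ) - 1) ∪
      Finset.Icc (2 * c) (2 * c + (a : ℤ) - 1)) :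
    A.card = 3 * a ∧ ((A + A).card : ℤ) = 3 * (A.card : ℤ) - 3 + ((a : ℤ) - 2) := by
  have hA3 : A = intervalProgression 3 c (a - 1) := by
    ext x
    simp only [hA, Finset.mem_union, Finset.mem_Icc, mem_intervalProgression]
    constructor
    · rintro ((hx | hx) | hx)
      exacts [⟨0, by norm_num, by omega⟩, ⟨1, by norm_num, by omega⟩, ⟨2, by norm_num, by omega⟩]
    · rintro ⟨i, hi, hx⟩
      interval_cases i <;> push_cast at hx <;> omega
  have hAA : A + A = intervalProgression 5 c ((a - 1) + (a - 1)) := by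
    rw [hA3, intervalProgression_add] <;> omega
  have hcardA := card_intervalProgression (n := 3) (c := c) (d := a - 1) (by omega) (by omega)
  have hcardAA := card_intervalProgression (n := 5) (c := c) (d := (a - 1) + (a - 1))
    (by omega) (by omega)
  rw [← hA3] at hcardA
  rw [← hAA] at hcardAA
  constructor
  · omega
  · rw [hcardAA, hcardA]
    ring
end

section
/- For every integer k > 15, the set A = [0, k-3] ∪ {k+10, 2k+20} of integers satisfies |A| = k and |2A| = 3k - 3 + 11. -/
/-!
The interval `I = [0, k-3]` contributes `I + I = [0, 2k-6]`, and the two outliers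
`x = k+10`, `y = 2k+20` contribute the translates `x + I`, `y + I` and the three sums
`2x = 2k+20`, `x + y = 3k+30`, `2y = 4k+40`. For `k ≥ 15` the translate `x + I` overlaps
`I + I`, and `2x` lies in `y + I`, so
`2A = [0, 2k+7] ∪ [2k+20, 3k+17] ∪ {3k+30, 4k+40}`, a set of `(2k+8) + (k-2) + 2` elements.
-/

open Pointwise Finset

theorem Finset.card_union_pair_of_lt {α : Type*} [LinearOrder α] {s : Finset α} {x y : α}
    (hs : ∀ a ∈ s, a < x) (hxy : x < y) : (s ∪ {x, y}).card = s.card + 2 := by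
  rw [card_union_of_disjoint (disjoint_left.2 fun a ha hxy' ↦ ?_), card_pair hxy.ne]
  simp only [mem_insert, mem_singleton] at hxy'
  rcases hxy' with rfl | rfl
  · exact (hs a ha).false
  · exact ((hs a ha).trans hxy).false

theorem Int.card_Icc_union_Icc_of_lt {a b c d : ℤ} (hbc : b < c) :
    (Icc a b ∪ Icc c d).card = (b + 1 - a).toNat + (d + 1 - c).toNat := by
  rw [card_union_of_disjoint (disjoint_left.2 fun x hx hx' ↦ ?_), Int.card_Icc, Int.card_Icc]
  simp only [mem_Icc] at hx hx'
  omega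

theorem Int.Icc_union_pair_add_self (n : ℤ) (hn : 15 ≤ n) :
    (Icc 0 (n - 3) ∪ {n + 10, 2 * n + 20}) + (Icc 0 (n - 3) ∪ {n + 10, 2 * n + 20}) =
      (Icc 0 (2 * n + 7) ∪ Icc (2 * n + 20) (3 * n + 17)) ∪ {3 * n + 30, 4 * n + 40} := by
  ext x
  simp only [mem_add, mem_union, mem_Icc, mem_insert, mem_singleton]
  constructor
  · rintro ⟨a, ha, b, hb, rfl⟩
    omega
  rintro ((⟨h0, h1⟩ | ⟨h0, h1⟩) | rfl | rfl)
  · by_cases h : x ≤ n - 3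
    · exact ⟨0, by omega, x, by omega, by omega⟩
    by_cases h' : x ≤ 2 * n - 6
    · exact ⟨x - (n - 3), by omega, n - 3, by omega, by omega⟩
    · exact ⟨n + 10, by omega, x - (n + 10), by omega, by omega⟩
  · exact ⟨2 * n + 20, by omega, x - (2 * n + 20), by omega, by omega⟩
  · exact ⟨n + 10, by omega, 2 * n + 20, by omega, by omega⟩
  · exact ⟨2 * n + 20, by omega, 2 * n + 20, by omega, by omega⟩

theorem stmt_3 (k : ℕ) (hk : 15 < k) (A : Finset ℤ)
    (hA : A = Finset.Icc 0 ((k : ℤ) - 3) ∪ {(k : ℤ) + 10, 2 * (k : ℤ) + 20}) :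
    A.card = k ∧ (A + A).card = 3 * k - 3 + 11 := by
  subst hA
  constructor
  · rw [card_union_pair_of_lt (fun a ha ↦ by simp only [mem_Icc] at ha; omega) (by omega),
      Int.card_Icc]
    omega
  · rw [Int.Icc_union_pair_add_self k (by omega),
      card_union_pair_of_lt (fun a ha ↦ by simp only [mem_union, mem_Icc] at ha; omega)
        (by omega),
      Int.card_Icc_union_Icc_of_lt (by omega)]
    omega
end

section
/- For every integer k > 14, the set A = [0, k-3] ∪ {3k, 3k+12} of integers satisfies |A| = k and |2A| = 3k - 3 + 11. -/
/-!
With `m = k - 3`, `a = 3k`, `b = 3k + 12`, the sumset of `[0, m] ∪ {a, b}` is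
`[0, 2m] ∪ ([a, a + m] ∪ [b, b + m]) ∪ {2a, a + b, 2b}`. The two translates of `[0, m]`
overlap into the single interval `[a, b + m]` as soon as `b ≤ a + m + 1`, i.e. `k ≥ 14`, and
the three pieces are pairwise disjoint, so `|2A| = (2m + 1) + (b - a + m + 1) + 3 = 3k + 8`.
-/

open Pointwise

namespace Int

open Finset

theorem Icc_add_Icc {a b c d : ℤ} (hab : a ≤ b) (hcd : c ≤ d) :
    Icc a b + Icc c d = Icc (a + c) (b + d) := by
  refine (Icc_add_Icc_subset a b c d).antisymm fun x hx => ?_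
  rw [mem_Icc] at hx
  exact mem_add.2 ⟨max a (x - d), by rw [mem_Icc]; omega, x - max a (x - d),
    by rw [mem_Icc]; omega, by ring⟩

theorem Icc_add_singleton (a b c : ℤ) : Icc a b + {c} = Icc (a + c) (b + c) := by
  rw [← image_add_right_Icc, ← coe_inj]
  push_cast
  exact Set.add_singleton

theorem Icc_union_Icc_of_le_add_one {a b c d : ℤ} (hac : a ≤ c) (hcb : c ≤ b + 1)
    (hbd : b ≤ d) :
    Icc a b ∪ Icc c d = Icc a d := by
  ext x
  simp only [mem_union, mem_Icc]
  omega

theorem Icc_zero_add_pair {m a b : ℤ} (hab : a ≤ b) (hb : b ≤ a + m + 1) :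
    Icc 0 m + {a, b} = Icc a (b + m) := by
  rw [insert_eq, add_union, Icc_add_singleton, Icc_add_singleton, zero_add, zero_add,
    add_comm m, add_comm m, Icc_union_Icc_of_le_add_one hab (by omega) (by omega)]

theorem pair_add_pair (a b : ℤ) : ({a, b} : Finset ℤ) + {a, b} = {2 * a, a + b, 2 * b} := by
  ext x
  simp only [mem_add, mem_insert, mem_singleton]
  constructor
  · rintro ⟨y, rfl | rfl, z, rfl | rfl, rfl⟩ <;> omega
  · rintro (rfl | rfl | rfl)
    exacts [⟨a, by simp, a, by simp, by ring⟩, ⟨a, by simp, b, by simp, rfl⟩,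
      ⟨b, by simp, b, by simp, by ring⟩]

variable {m a b : ℤ}

theorem Icc_union_pair_add_self_s4 (hm : 0 ≤ m) (hab : a ≤ b) (hb : b ≤ a + m + 1) :
    (Icc 0 m ∪ {a, b}) + (Icc 0 m ∪ {a, b}) =
      Icc 0 (2 * m) ∪ Icc a (b + m) ∪ {2 * a, a + b, 2 * b} := by
  rw [union_add, add_union, add_union, Icc_add_Icc hm hm, add_comm ({a, b} : Finset ℤ),
    Icc_zero_add_pair hab hb, pair_add_pair, add_zero, ← two_mul, union_assoc,
    ← union_assoc (Icc a (b + m)), union_self, union_assoc]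

theorem card_Icc_union_pair (hm : 0 ≤ m) (hma : m < a) (hab : a < b) :
    ((Icc 0 m ∪ {a, b}).card : ℤ) = m + 3 := by
  have hdisj : Disjoint (Icc 0 m) {a, b} := by
    simp only [disjoint_left, mem_Icc, mem_insert, mem_singleton, not_or, and_imp]; omega
  rw [card_union_of_disjoint hdisj, card_pair hab.ne, card_Icc]
  omega

theorem card_Icc_union_pair_add_self (hm : 0 ≤ m) (hma : 2 * m < a) (hab : a < b)
    (hb : b ≤ a + m + 1) (hba : b + m < 2 * a) :
    (((Icc 0 m ∪ {a, b}) + (Icc 0 m ∪ {a, b})).card : ℤ) = 3 * m + b - a + 5 := by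
  have hsums : ({2 * a, a + b, 2 * b} : Finset ℤ).card = 3 := card_eq_three.2
    ⟨_, _, _, by omega, by omega, by omega, rfl⟩
  rw [Icc_union_pair_add_self_s4 hm hab.le hb, card_union_of_disjoint, card_union_of_disjoint,
    card_Icc, card_Icc, hsums]
  · omega
  · simp only [disjoint_left, mem_Icc, not_and, not_le, and_imp]; omega
  · simp only [disjoint_left, mem_union, mem_Icc, mem_insert, mem_singleton, not_or]; omega

end Int

theorem stmt_4 (k : ℕ) (hk : 14 < k) (A : Finset ℤ)
    (hA : A = Finset.Icc 0 ((k : ℤ) - 3) ∪ {3 * (k : ℤ), 3 * (k : ℤ) + 12}) :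
    A.card = k ∧ (A + A).card = 3 * k - 3 + 11 := by
  subst hA
  constructor
  · have := Int.card_Icc_union_pair (m := (k : ℤ) - 3) (a := 3 * k) (b := 3 * k + 12)
      (by omega) (by omega) (by omega)
    omega
  · have := Int.card_Icc_union_pair_add_self (m := (k : ℤ) - 3) (a := 3 * k) (b := 3 * k + 12)
      (by omega) (by omega) (by omega) (by omega) (by omega)
    omega
end

section
/- Let d ≥ 1 and a, b ∈ [0, d-1]. Suppose A ⊆ a + dℕ and B ⊆ b + dℕ are sets of integers, x ∈ a + dℕ, y ∈ b + dℕ, and t ∈ dℕ. If |A ∩ [x, x+t]| + |B ∩ [y-t, y]| > t/d + 1, then x + y ∈ A + B. -/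
/-!
Both `A ∩ [x, x + t]` and the reflection `x + y - (B ∩ [y - t, y])` lie in the progression
`{x, x + d, …, x + t}` of `t / d + 1` elements, so by pigeonhole they meet; a common point
`z = x + y - w` writes `x + y` as `z + w ∈ A + B`.
-/

open Finset Pointwise

theorem Finset.mem_add_of_card_lt_card_add_card {G : Type*} [AddCommGroup G] [DecidableEq G]
    {A B P : Finset G} {s : G} (hA : A ⊆ P) (hB : B.image (s - ·) ⊆ P)
    (hcard : #P < #A + #B) : s ∈ A + B := by
  have hcard' : #P < #A + #(B.image (s - ·)) := by
    rwa [card_image_of_injective _ (sub_right_injective (b := s))]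
  obtain ⟨z, hz⟩ := inter_nonempty_of_card_lt_card_add_card hA hB hcard'
  obtain ⟨hzA, hzB⟩ := mem_inter.1 hz
  obtain ⟨w, hwB, rfl⟩ := mem_image.1 hzB
  simpa using add_mem_add hzA hwB

theorem Int.card_image_Icc_add_mul {d : ℤ} (hd : d ≠ 0) (x : ℤ) (n : ℕ) :
    #((Icc (0 : ℤ) n).image (x + d * ·)) = n + 1 := by
  rw [card_image_of_injective _ fun u v h => mul_left_cancel₀ hd (add_left_cancel h), Int.card_Icc]
  omega

theorem Int.mem_image_Icc_add_mul {d x z : ℤ} {n : ℕ} (hd : 0 < d) (hdvd : d ∣ z - x)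
    (hz : z ∈ Icc x (x + d * n)) : z ∈ (Icc (0 : ℤ) n).image (x + d * ·) := by
  obtain ⟨c, hc⟩ := hdvd
  obtain ⟨hxz, hzx⟩ := mem_Icc.1 hz
  refine mem_image.2 ⟨c, mem_Icc.2 ⟨?_, ?_⟩, by linarith⟩
  · nlinarith
  · nlinarith

theorem stmt_5_general (d a b x y t : ℤ) (A B : Finset ℤ)
    (hd : 1 ≤ d)
    (hA : ∀ z ∈ A, ∃ n : ℕ, z = a + d * n)
    (hB : ∀ z ∈ B, ∃ n : ℕ, z = b + d * n)
    (hx : ∃ n : ℕ, x = a + d * n) (hy : ∃ n : ℕ, y = b + d * n)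
    (ht : ∃ n : ℕ, t = d * n)
    (hcard : (t / d : ℤ) + 1 <
      ((A ∩ Finset.Icc x (x + t)).card : ℤ) + ((B ∩ Finset.Icc (y - t) y).card : ℤ)) :
    x + y ∈ A + B := by
  obtain ⟨m, hm⟩ := hx
  obtain ⟨k, hk⟩ := hy
  obtain ⟨n, hn⟩ := ht
  have hd0 : 0 < d := by omega
  have hdvdA : ∀ z ∈ A, d ∣ z - x := fun z hz => by
    obtain ⟨p, hp⟩ := hA z hz
    exact ⟨p - m, by rw [hp, hm]; ring⟩
  have hdvdB : ∀ w ∈ B, d ∣ y - w := fun w hw => by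
    obtain ⟨p, hp⟩ := hB w hw
    exact ⟨k - p, by rw [hp, hk]; ring⟩
  have hsum : x + y ∈ A ∩ Icc x (x + t) + B ∩ Icc (y - t) y := by
    refine mem_add_of_card_lt_card_add_card (P := (Icc (0 : ℤ) n).image (x + d * ·)) ?_ ?_ ?_
    · intro z hz
      obtain ⟨hzA, hzI⟩ := mem_inter.1 hz
      exact Int.mem_image_Icc_add_mul hd0 (hdvdA z hzA) (hn ▸ hzI)
    · intro z hz
      obtain ⟨w, hw, rfl⟩ := mem_image.1 hz
      obtain ⟨hwB, hwI⟩ := mem_inter.1 hw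
      refine Int.mem_image_Icc_add_mul hd0 (by convert hdvdB w hwB using 1; ring) ?_
      rw [mem_Icc] at hwI ⊢
      constructor <;> linarith
    · have htd : t / d = n := by rw [hn, Int.mul_ediv_cancel_left _ hd0.ne']
      rw [Int.card_image_Icc_add_mul hd0.ne']
      omega
  exact add_subset_add inter_subset_left inter_subset_left hsum

theorem stmt_5 (d a b x y t : ℤ) (A B : Finset ℤ)
    (hd : 1 ≤ d) (ha : a ∈ Finset.Icc 0 (d - 1)) (hb : b ∈ Finset.Icc 0 (d - 1))
    (hA : ∀ z ∈ A, ∃ n : ℕ, z = a + d * n)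
    (hB : ∀ z ∈ B, ∃ n : ℕ, z = b + d * n)
    (hx : ∃ n : ℕ, x = a + d * n) (hy : ∃ n : ℕ, y = b + d * n)
    (ht : ∃ n : ℕ, t = d * n)
    (hcard : (t / d : ℤ) + 1 <
      ((A ∩ Finset.Icc x (x + t)).card : ℤ) + ((B ∩ Finset.Icc (y - t) y).card : ℤ)) :
    x + y ∈ A + B :=
  stmt_5_general d a b x y t A B hd hA hB hx hy ht hcard
end
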